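/- There exist constants c > 0, ε₀ ∈ (0,1) and n₀ such that for every n = 2^k ≥ n₀ and every ε ∈ (0, ε₀), the quasi-entropy of the Fourier ε-perturbation satisfies Φ(Id + εF) ≤ −c ε² n log₂ n, where F is the n×n Walsh–Hadamard matrix. -/

import Mathlib

open Matrix Finset

noncomputable section

/-- Walsh–Hadamard matrix of size `2^k`. -/
def WH (k : ℕ) : Matrix (Fin (2^k)) (Fin (2^k)) ℝ := fun i j =>
  ((-1 : ℝ) ^ (∑ b ∈ Finset.range k, ((i.val >>> b) % 2) * ((j.val >>> b) % 2))) /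
    Real.sqrt (2^k)

/-- Quasi-entropy `Φ(M)` (base-2 logs, `0·log 0 = 0`). -/
def qent {n : ℕ} (M : Matrix (Fin n) (Fin n) ℝ) : ℝ :=
  -∑ i, ∑ j, (M i j * M⁻¹ᵀ i j) * Real.logb 2 |M i j * M⁻¹ᵀ i j|

/-- Preconditioned quasi-entropy `Φ_{A,B}(M)`. -/
def qentP {n : ℕ} (A B M : Matrix (Fin n) (Fin n) ℝ) : ℝ :=
  -∑ i, ∑ j, ((M * A) i j * (M⁻¹ᵀ * B) i j) * Real.logb 2 |(M * A) i j * (M⁻¹ᵀ * B) i j|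

/-- Summand of the paired potential. -/
def pairS {n : ℕ} (P Q : Matrix (Fin n) (Fin n ⊕ Fin n) ℝ)
    (M : Matrix (Fin n) (Fin n) ℝ) (i j : Fin n) : ℝ :=
  (M * P) i (Sum.inl j) * (M⁻¹ᵀ * Q) i (Sum.inl j) +
    (M * P) i (Sum.inr j) * (M⁻¹ᵀ * Q) i (Sum.inr j)

/-- Paired potential `Φ̂_{P,Q}(M)` for preconditioners `P Q : n × 2n`. -/
def pairedPot {n : ℕ} (P Q : Matrix (Fin n) (Fin n ⊕ Fin n) ℝ)
    (M : Matrix (Fin n) (Fin n) ℝ) : ℝ :=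
  -∑ i, ∑ j, pairS P Q M i j * Real.logb 2 |pairS P Q M i j|

/-- Planar rotation matrix `R_{i,i',θ}`. -/
def rotMat {n : ℕ} (i i' : Fin n) (θ : ℝ) : Matrix (Fin n) (Fin n) ℝ :=
  Matrix.of fun a b =>
    if a = i ∧ b = i then Real.cos θ
    else if a = i ∧ b = i' then Real.sin θ
    else if a = i' ∧ b = i then -Real.sin θ
    else if a = i' ∧ b = i' then Real.cos θ
    else if a = b then 1 else 0

/-- Spectral norm (ℓ₂ operator norm) of a square real matrix. -/
def specNorm {n : ℕ} (M : Matrix (Fin n) (Fin n) ℝ) : ℝ :=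
  ‖LinearMap.toContinuousLinearMap (Matrix.toEuclideanLin M)‖

/-- Condition number `κ(M) = ‖M‖₂ ‖M⁻¹‖₂`. -/
def condNum {n : ℕ} (M : Matrix (Fin n) (Fin n) ℝ) : ℝ :=
  specNorm M * specNorm M⁻¹

/-- Singular values: square roots of eigenvalues of `Mᴴ M` (= `Mᵀ M` over ℝ). -/
def singVals {n : ℕ} (M : Matrix (Fin n) (Fin n) ℝ) (i : Fin n) : ℝ :=
  Real.sqrt ((Matrix.isHermitian_conjTranspose_mul_self M).eigenvalues i)

/-- Rotation step of the linear algebraic model. -/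
def IsRotStep {n : ℕ} (M M' : Matrix (Fin n) (Fin n) ℝ) : Prop :=
  ∃ (i i' : Fin n) (θ : ℝ), i < i' ∧ M' = rotMat i i' θ * M

/-- Constant gate: one row is multiplied by a nonzero constant. -/
def IsConstGate {n : ℕ} (M M' : Matrix (Fin n) (Fin n) ℝ) : Prop :=
  ∃ (r : Fin n) (c : ℝ), c ≠ 0 ∧ M' = Matrix.updateRow M r (c • M r)

/-- A single step of a linear algebraic algorithm. -/
def IsStep {n : ℕ} (M M' : Matrix (Fin n) (Fin n) ℝ) : Prop :=
  IsRotStep M M' ∨ IsConstGate M M'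

/-- `A` is an `m`-step linear algebraic algorithm. -/
def IsAlgorithm {n : ℕ} (m : ℕ) (A : ℕ → Matrix (Fin n) (Fin n) ℝ) : Prop :=
  A 0 = 1 ∧ ∀ t < m, IsStep (A t) (A (t+1))

/-- The algorithm is uniformly `κ`-well conditioned. -/
def WellConditioned {n : ℕ} (m : ℕ) (A : ℕ → Matrix (Fin n) (Fin n) ℝ) (κ : ℝ) : Prop :=
  ∀ t ≤ m, IsUnit (A t).det ∧ condNum (A t) ≤ κ

end

/-! `F` is a symmetric involution, so `(1 + εF)⁻¹ = (1 - εF) / (1 - ε²)` and the entrywise product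
of `M = 1 + εF` with `M⁻ᵀ` equals `(δᵢⱼ - ε² Fᵢⱼ²) / (1 - ε²) = (δᵢⱼ - ε² / n) / (1 - ε²)`.
The `n` diagonal entries are `≥ 1` and contribute nonpositively to `Φ`; each of the `n (n - 1)`
off-diagonal entries is `-r` with `ε² / n ≤ r ≤ 1 / n`, so it contributes
`r log₂ r ≤ -r log₂ n ≤ -(ε² / n) log₂ n`, for a total of at most `-(n - 1) ε² log₂ n`. -/

lemma sum_fin_two_neg_one_pow_mul (s t : Fin 2) :
    ∑ u : Fin 2, (-1 : ℝ) ^ ((s : ℕ) * u) * (-1) ^ ((u : ℕ) * t) = if s = t then 2 else 0 := by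
  fin_cases s <;> fin_cases t <;> norm_num [Fin.sum_univ_two]

lemma sum_neg_one_pow_dot_mul_neg_one_pow_dot {k : ℕ} (x y : Fin k → Fin 2) :
    ∑ z : Fin k → Fin 2, (-1 : ℝ) ^ (∑ b, (x b : ℕ) * z b) * (-1) ^ (∑ b, (z b : ℕ) * y b) =
      if x = y then 2 ^ k else 0 := by
  calc _ = ∑ z : Fin k → Fin 2, ∏ b, (-1 : ℝ) ^ ((x b : ℕ) * z b) * (-1) ^ ((z b : ℕ) * y b) := by
        simp only [prod_mul_distrib, prod_pow_eq_pow_sum]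
    _ = ∏ b, ∑ u : Fin 2, (-1 : ℝ) ^ ((x b : ℕ) * u) * (-1) ^ ((u : ℕ) * y b) := by
        rw [Fintype.prod_sum]
    _ = ∏ b, if x b = y b then (2 : ℝ) else 0 := by simp only [sum_fin_two_neg_one_pow_mul]
    _ = _ := by
      split_ifs with h
      · simp [h]
      · obtain ⟨b, hb⟩ := Function.ne_iff.mp h
        exact prod_eq_zero (mem_univ b) (if_neg hb)

-- `finFunctionFinEquiv.symm i b` is the `b`-th binary digit of `i`.
lemma WH_apply (k : ℕ) (i j : Fin (2 ^ k)) :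
    WH k i j = (-1 : ℝ) ^ (∑ b, (finFunctionFinEquiv.symm i b : ℕ) * finFunctionFinEquiv.symm j b) /
      √(2 ^ k) := by
  simp only [WH, finFunctionFinEquiv_symm_apply_val, Nat.shiftRight_eq_div_pow]
  rw [Fin.sum_univ_eq_sum_range (fun b => (i : ℕ) / 2 ^ b % 2 * ((j : ℕ) / 2 ^ b % 2)) k]

lemma WH_transpose (k : ℕ) : (WH k)ᵀ = WH k := by
  ext i j
  simp only [transpose_apply, WH, Nat.mul_comm]

lemma WH_apply_sq (k : ℕ) (i j : Fin (2 ^ k)) : WH k i j ^ 2 = (2 ^ k)⁻¹ := by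
  rw [WH, div_pow, ← pow_mul, mul_comm, pow_mul, neg_one_sq, one_pow,
    Real.sq_sqrt (by positivity), one_div]

lemma WH_mul_self (k : ℕ) : WH k * WH k = 1 := by
  ext i l
  have hsqrt : √(2 ^ k : ℝ) * √(2 ^ k) = 2 ^ k := Real.mul_self_sqrt (by positivity)
  simp only [mul_apply, WH_apply, div_mul_div_comm, hsqrt, ← sum_div]
  rw [Equiv.sum_comp finFunctionFinEquiv.symm
      (fun z => (-1 : ℝ) ^ (∑ b, (finFunctionFinEquiv.symm i b : ℕ) * z b) *
        (-1) ^ (∑ b, (z b : ℕ) * finFunctionFinEquiv.symm l b)),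
    sum_neg_one_pow_dot_mul_neg_one_pow_dot, one_apply]
  simp only [finFunctionFinEquiv.symm.injective.eq_iff]
  split_ifs <;> simp

section Involution

variable {K n : Type*} [Field K] [Fintype n] [DecidableEq n] {F : Matrix n n K} {ε : K}

lemma inv_one_add_smul_of_mul_self_eq_one (hF : F * F = 1) (hε : ε ^ 2 ≠ 1) :
    (1 + ε • F)⁻¹ = (1 - ε ^ 2)⁻¹ • (1 - ε • F) := by
  apply inv_eq_right_inv
  have hprod : (1 + ε • F) * (1 - ε • F) = (1 - ε ^ 2) • 1 := by
    rw [add_mul, mul_sub, mul_sub, smul_mul_smul_comm, hF]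
    simp only [mul_one, one_mul, sub_smul, one_smul]
    rw [sq]; abel
  rw [Matrix.mul_smul, hprod, smul_smul, inv_mul_cancel₀ (sub_ne_zero.mpr hε.symm), one_smul]

lemma one_add_smul_apply_mul_inv_transpose_apply (hF : F * F = 1) (hFT : Fᵀ = F)
    (hε : ε ^ 2 ≠ 1) (i j : n) :
    (1 + ε • F) i j * (1 + ε • F)⁻¹ᵀ i j =
      (1 - ε ^ 2)⁻¹ * ((1 : Matrix n n K) i j - ε ^ 2 * F i j ^ 2) := by
  rw [inv_one_add_smul_of_mul_self_eq_one hF hε, transpose_smul, transpose_sub, transpose_one,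
    transpose_smul, hFT]
  simp only [Matrix.add_apply, Matrix.sub_apply, Matrix.smul_apply, one_apply, smul_eq_mul]
  split_ifs <;> ring

end Involution

lemma qent_eq_of_apply_mul_inv_transpose_apply_eq_ite {n : ℕ} (M : Matrix (Fin n) (Fin n) ℝ)
    {a b : ℝ} (h : ∀ i j, M i j * M⁻¹ᵀ i j = if i = j then a else b) :
    qent M = -(n * (a * Real.logb 2 |a|) + n * (n - 1) * (b * Real.logb 2 |b|)) := by
  have hsplit : ∀ i j, M i j * M⁻¹ᵀ i j * Real.logb 2 |M i j * M⁻¹ᵀ i j| =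
      b * Real.logb 2 |b| + if i = j then a * Real.logb 2 |a| - b * Real.logb 2 |b| else 0 := by
    intro i j
    rw [h]
    split_ifs <;> ring
  simp only [qent, hsplit, sum_add_distrib, sum_ite_eq, mem_univ, if_true, sum_const,
    card_univ, Fintype.card_fin, nsmul_eq_mul]
  ring

lemma one_add_smul_WH_apply_mul_inv_transpose_apply (k : ℕ) {ε : ℝ} (hε : ε ^ 2 ≠ 1)
    (i j : Fin (2 ^ k)) :
    (1 + ε • WH k) i j * (1 + ε • WH k)⁻¹ᵀ i j =
      if i = j then (1 - ε ^ 2)⁻¹ * (1 - ε ^ 2 / 2 ^ k) else -((1 - ε ^ 2)⁻¹ * (ε ^ 2 / 2 ^ k)) := by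
  rw [one_add_smul_apply_mul_inv_transpose_apply (WH_mul_self k) (WH_transpose k) hε, WH_apply_sq,
    one_apply]
  split_ifs <;> ring

lemma neg_mul_logb_add_mul_logb_le {N a r t : ℝ} (hN : 2 ≤ N) (ha : 1 ≤ a) (hr : 0 < r)
    (hrN : r ≤ N⁻¹) (ht : 0 ≤ t) (htr : t ≤ N * r) :
    -(N * (a * Real.logb 2 |a|) + N * (N - 1) * (-r * Real.logb 2 |-r|)) ≤
      -(1 / 2 * t * N * Real.logb 2 N) := by
  have hlogN : 0 ≤ Real.logb 2 N := Real.logb_nonneg one_lt_two (by linarith)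
  have hdiag : 0 ≤ a * Real.logb 2 |a| :=
    mul_nonneg (by linarith) (Real.logb_nonneg one_lt_two (by rwa [abs_of_pos (by linarith)]))
  have hlogr : Real.logb 2 r ≤ -Real.logb 2 N := by
    rw [← Real.logb_inv]
    exact Real.logb_le_logb_of_le one_lt_two hr hrN
  have hoff : r * Real.logb 2 N ≤ -r * Real.logb 2 |-r| := by
    rw [abs_neg, abs_of_pos hr, neg_mul, ← mul_neg]
    exact mul_le_mul_of_nonneg_left (by linarith) hr.le
  have hcross : 1 / 2 * t * N * Real.logb 2 N ≤ N * (N - 1) * (-r * Real.logb 2 |-r|) :=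
    calc 1 / 2 * t * N * Real.logb 2 N ≤ (N - 1) * t * Real.logb 2 N := by
          nlinarith [mul_nonneg ht hlogN]
      _ ≤ (N - 1) * (N * r) * Real.logb 2 N := by gcongr; linarith
      _ = N * (N - 1) * (r * Real.logb 2 N) := by ring
      _ ≤ N * (N - 1) * (-r * Real.logb 2 |-r|) := by gcongr; nlinarith
  nlinarith [mul_nonneg (by linarith : (0 : ℝ) ≤ N) hdiag]

/-- `Φ(Id + εF) ≤ -c ε² n log₂ n` for suitable constants. -/
theorem qent_perturbation_upper :
    ∃ c > (0:ℝ), ∃ ε₀ ∈ Set.Ioo (0:ℝ) 1, ∃ n₀ : ℕ,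
      ∀ k : ℕ, n₀ ≤ 2^k → ∀ ε : ℝ, 0 < ε → ε < ε₀ →
        qent (1 + ε • WH k) ≤ -(c * ε^2 * 2^k * Real.logb 2 (2^k)) := by
  refine ⟨1 / 2, by norm_num, 1 / 2, ⟨by norm_num, by norm_num⟩, 2, fun k hk ε hε hε₀ => ?_⟩
  have hN : (2 : ℝ) ≤ 2 ^ k := by exact_mod_cast hk
  have hε2 : ε ^ 2 < 1 / 4 := by nlinarith
  have hpos : 0 < 1 - ε ^ 2 := by linarith
  rw [qent_eq_of_apply_mul_inv_transpose_apply_eq_ite _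
    (one_add_smul_WH_apply_mul_inv_transpose_apply k (by linarith))]
  push_cast
  refine neg_mul_logb_add_mul_logb_le hN ?_ (by positivity) ?_ (sq_nonneg ε) ?_
  · rw [le_inv_mul_iff₀ hpos, mul_one]
    linarith [div_le_self (sq_nonneg ε) (by linarith : (1 : ℝ) ≤ 2 ^ k)]
  · rw [div_eq_mul_inv, ← mul_assoc]
    exact mul_le_of_le_one_left (by positivity) (by rw [inv_mul_le_iff₀ hpos]; linarith)
  · rw [mul_div_assoc', mul_div_cancel₀ _ (by positivity), le_inv_mul_iff₀ hpos]
    nlinarith
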